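/- Let X, Y, Z, Z₁, Z₂ be n×n real symmetric matrices such that ⟨(X+Y)s, s⟩ + 2⟨(X−Y)s, t⟩ + ⟨(X+Y)t, t⟩ ≤ ⟨Z₁ s, s⟩ + 2⟨Z s, t⟩ + ⟨Z₂ t, t⟩ for all s, t ∈ ℝⁿ (so in particular X+Y ≤ Z₁ and X+Y ≤ Z₂ in the Loewner order). Then ‖X − Y − Z‖ ≤ ‖X + Y − Z₁‖ + ‖Z₂ − Z₁‖^{1/2} · ‖X + Y − Z₁‖^{1/2}, where ‖·‖ denotes the operator norm. -/

import Mathlib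

open Matrix

noncomputable def opNorm {n : ℕ} (M : Matrix (Fin n) (Fin n) ℝ) : ℝ :=
  ‖Matrix.toEuclideanCLM (𝕜 := ℝ) M‖

section aux

variable {n : ℕ}

lemma inner_toE (M : Matrix (Fin n) (Fin n) ℝ) (x y : EuclideanSpace ℝ (Fin n)) :
    inner ℝ ((Matrix.toEuclideanCLM (𝕜 := ℝ) M) x) y
      = M *ᵥ (WithLp.equiv 2 _ x) ⬝ᵥ (WithLp.equiv 2 _ y) := by
  have hx : WithLp.equiv 2 _ ((Matrix.toEuclideanCLM (𝕜 := ℝ) M) x)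
      = M *ᵥ (WithLp.equiv 2 _ x) := by
    exact Matrix.ofLp_toEuclideanCLM M x
  simp only [PiLp.inner_apply, RCLike.inner_apply, starRingEnd_apply, star_trivial]
  rw [show ((Matrix.toEuclideanCLM (𝕜 := ℝ) M) x : Fin n → ℝ)
      = fun i => (M *ᵥ (WithLp.equiv 2 _ x)) i from funext fun i => congrFun hx i]
  simp [dotProduct, mul_comm]

lemma quad_le (M : Matrix (Fin n) (Fin n) ℝ) (x : EuclideanSpace ℝ (Fin n)) :
    M *ᵥ (WithLp.equiv 2 _ x) ⬝ᵥ (WithLp.equiv 2 _ x) ≤ opNorm M * (‖x‖ * ‖x‖) := by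
  rw [← inner_toE]
  calc inner ℝ ((Matrix.toEuclideanCLM (𝕜 := ℝ) M) x) x
      ≤ ‖(Matrix.toEuclideanCLM (𝕜 := ℝ) M) x‖ * ‖x‖ := real_inner_le_norm _ _
    _ ≤ (‖Matrix.toEuclideanCLM (𝕜 := ℝ) M‖ * ‖x‖) * ‖x‖ := by
        gcongr
        exact (Matrix.toEuclideanCLM (𝕜 := ℝ) M).le_opNorm x
    _ = opNorm M * (‖x‖ * ‖x‖) := by rw [opNorm]; ring

lemma opNorm_le_aux (M : Matrix (Fin n) (Fin n) ℝ) (C : ℝ) (hC : 0 ≤ C)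
    (h : ∀ x y : EuclideanSpace ℝ (Fin n),
      M *ᵥ (WithLp.equiv 2 _ x) ⬝ᵥ (WithLp.equiv 2 _ y) ≤ C * (‖x‖ * ‖y‖)) :
    opNorm M ≤ C := by
  apply ContinuousLinearMap.opNorm_le_bound _ hC
  intro x
  set T := Matrix.toEuclideanCLM (𝕜 := ℝ) M with hT
  rcases eq_or_lt_of_le (norm_nonneg (T x)) with h0 | h0
  · rw [← h0]; positivity
  · have h1 : ‖T x‖ * ‖T x‖ ≤ (C * ‖x‖) * ‖T x‖ := by
      calc ‖T x‖ * ‖T x‖ = inner ℝ (T x) (T x) := (real_inner_self_eq_norm_mul_norm _).symm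
        _ = M *ᵥ (WithLp.equiv 2 _ x) ⬝ᵥ (WithLp.equiv 2 _ (T x)) := inner_toE M x (T x)
        _ ≤ C * (‖x‖ * ‖T x‖) := h x (T x)
        _ = (C * ‖x‖) * ‖T x‖ := by ring
    exact le_of_mul_le_mul_right h1 h0

lemma min_aux (u p q : ℝ) (hp : 0 ≤ p) (hq : 0 ≤ q)
    (h : ∀ c : ℝ, 0 < c → 2 * u ≤ c * p + c⁻¹ * q) : u ≤ Real.sqrt (p * q) := by
  rcases hp.eq_or_lt with hp0 | hp0
  · have hu : u ≤ 0 := by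
      apply le_of_forall_pos_le_add
      intro ε hε
      have hc : (0:ℝ) < q / ε + 1 := by positivity
      have h1 := h (q / ε + 1) hc
      rw [← hp0] at h1
      have key : (q / ε + 1)⁻¹ * q ≤ ε := by
        rw [inv_mul_le_iff₀ hc, show (q / ε + 1) * ε = q + ε by field_simp]
        linarith
      linarith
    calc u ≤ 0 := hu
      _ ≤ Real.sqrt (p * q) := Real.sqrt_nonneg _
  rcases hq.eq_or_lt with hq0 | hq0
  · have hu : u ≤ 0 := by
      apply le_of_forall_pos_le_add
      intro ε hε
      have hc : (0:ℝ) < 2 * ε / p := by positivity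
      have h1 := h (2 * ε / p) hc
      rw [← hq0] at h1
      have : 2 * ε / p * p = 2 * ε := by field_simp
      rw [mul_zero, add_zero, this] at h1
      linarith
    calc u ≤ 0 := hu
      _ ≤ Real.sqrt (p * q) := Real.sqrt_nonneg _
  · set sp := Real.sqrt p with hsp
    set sq := Real.sqrt q with hsq
    have hsp2 : sp * sp = p := Real.mul_self_sqrt hp
    have hsq2 : sq * sq = q := Real.mul_self_sqrt hq
    have hsp0 : 0 < sp := Real.sqrt_pos.mpr hp0
    have hsq0 : 0 < sq := Real.sqrt_pos.mpr hq0
    have h1 := h (sq / sp) (by positivity)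
    have e1 : sq / sp * p = sp * sq := by rw [← hsp2]; field_simp
    have e2 : (sq / sp)⁻¹ * q = sp * sq := by
      rw [inv_div, ← hsq2]; field_simp
    rw [e1, e2] at h1
    rw [Real.sqrt_mul hp, ← hsp, ← hsq]
    linarith

end aux

set_option maxHeartbeats 2000000 in
/-- From the quadratic-form inequality (8) one deduces the operator-norm bound
`‖X − Y − Z‖ ≤ ‖X + Y − Z₁‖ + ‖Z₂ − Z₁‖^{1/2}·‖X + Y − Z₁‖^{1/2}`. -/
theorem offdiag_opNorm_bound {n : ℕ}
    (X Y Z Z₁ Z₂ : Matrix (Fin n) (Fin n) ℝ)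
    (hX : X.IsSymm) (hY : Y.IsSymm) (hZ : Z.IsSymm)
    (hZ₁ : Z₁.IsSymm) (hZ₂ : Z₂.IsSymm)
    (h : ∀ s t : Fin n → ℝ,
      (X + Y) *ᵥ s ⬝ᵥ s + 2 * ((X - Y) *ᵥ s ⬝ᵥ t) + (X + Y) *ᵥ t ⬝ᵥ t ≤
        Z₁ *ᵥ s ⬝ᵥ s + 2 * (Z *ᵥ s ⬝ᵥ t) + Z₂ *ᵥ t ⬝ᵥ t) :
    opNorm (X - Y - Z) ≤
      opNorm (X + Y - Z₁) +
        opNorm (Z₂ - Z₁) ^ ((1 : ℝ) / 2) * opNorm (X + Y - Z₁) ^ ((1 : ℝ) / 2) := by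
  set a := opNorm (X + Y - Z₁) with ha_def
  set b := opNorm (Z₂ - Z₁) with hb_def
  have ha : 0 ≤ a := norm_nonneg _
  have hb : 0 ≤ b := norm_nonneg _
  -- rewrite the hypothesis
  have h2 : ∀ s t : Fin n → ℝ,
      2 * ((X - Y - Z) *ᵥ s ⬝ᵥ t) ≤
        (Z₁ - (X + Y)) *ᵥ s ⬝ᵥ s + (Z₂ - (X + Y)) *ᵥ t ⬝ᵥ t := by
    intro s t
    have h0 := h s t
    simp only [Matrix.add_mulVec, Matrix.sub_mulVec, add_dotProduct, sub_dotProduct] at h0 ⊢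
    linarith
  -- nonnegativity of the diagonal quadratic forms
  have hP0 : ∀ s : Fin n → ℝ, 0 ≤ (Z₁ - (X + Y)) *ᵥ s ⬝ᵥ s := by
    intro s
    have := h2 s 0
    simpa using this
  have hQ0 : ∀ t : Fin n → ℝ, 0 ≤ (Z₂ - (X + Y)) *ᵥ t ⬝ᵥ t := by
    intro t
    have := h2 0 t
    simpa using this
  -- norm of Z₁ - (X+Y)
  have hPnorm : opNorm (Z₁ - (X + Y)) = a := by
    rw [ha_def, opNorm, opNorm, show Z₁ - (X + Y) = -(X + Y - Z₁) by abel, map_neg, norm_neg]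
  -- quadratic form bounds
  have hPle : ∀ x : EuclideanSpace ℝ (Fin n),
      (Z₁ - (X + Y)) *ᵥ (WithLp.equiv 2 _ x) ⬝ᵥ (WithLp.equiv 2 _ x) ≤ a * (‖x‖ * ‖x‖) := by
    intro x
    calc (Z₁ - (X + Y)) *ᵥ (WithLp.equiv 2 _ x) ⬝ᵥ (WithLp.equiv 2 _ x)
        ≤ opNorm (Z₁ - (X + Y)) * (‖x‖ * ‖x‖) := quad_le _ x
      _ = a * (‖x‖ * ‖x‖) := by rw [hPnorm]
  have hQle : ∀ x : EuclideanSpace ℝ (Fin n),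
      (Z₂ - (X + Y)) *ᵥ (WithLp.equiv 2 _ x) ⬝ᵥ (WithLp.equiv 2 _ x) ≤ (a + b) * (‖x‖ * ‖x‖) := by
    intro x
    have hsplit : (Z₂ - (X + Y)) *ᵥ (WithLp.equiv 2 _ x) ⬝ᵥ (WithLp.equiv 2 _ x)
        = (Z₂ - Z₁) *ᵥ (WithLp.equiv 2 _ x) ⬝ᵥ (WithLp.equiv 2 _ x)
          + (Z₁ - (X + Y)) *ᵥ (WithLp.equiv 2 _ x) ⬝ᵥ (WithLp.equiv 2 _ x) := by
      rw [show Z₂ - (X + Y) = (Z₂ - Z₁) + (Z₁ - (X + Y)) by abel, Matrix.add_mulVec,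
        add_dotProduct]
    rw [hsplit]
    have h1 := quad_le (Z₂ - Z₁) x
    have h3 := hPle x
    rw [← hb_def] at h1
    linarith
  -- key bound on the bilinear form of D := X - Y - Z
  set C := Real.sqrt (a * (a + b)) with hC_def
  have hDop : opNorm (X - Y - Z) ≤ C := by
    apply opNorm_le_aux _ _ (Real.sqrt_nonneg _)
    intro x y
    set s : Fin n → ℝ := WithLp.equiv 2 _ x with hs
    set t : Fin n → ℝ := WithLp.equiv 2 _ y with ht
    set p := (Z₁ - (X + Y)) *ᵥ s ⬝ᵥ s with hp_def
    set q := (Z₂ - (X + Y)) *ᵥ t ⬝ᵥ t with hq_def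
    have hmin : (X - Y - Z) *ᵥ s ⬝ᵥ t ≤ Real.sqrt (p * q) := by
      apply min_aux _ _ _ (hP0 s) (hQ0 t)
      intro c hc
      have hsc : (0:ℝ) < Real.sqrt c := Real.sqrt_pos.mpr hc
      have h3 := h2 (Real.sqrt c • s) ((Real.sqrt c)⁻¹ • t)
      simp only [Matrix.mulVec_smul, smul_dotProduct, dotProduct_smul, smul_eq_mul] at h3
      have hcc : Real.sqrt c * Real.sqrt c = c := Real.mul_self_sqrt hc.le
      have hcinv : (Real.sqrt c)⁻¹ * (Real.sqrt c)⁻¹ = c⁻¹ := by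
        rw [← mul_inv, hcc]
      rw [← mul_assoc ((Real.sqrt c)⁻¹) (Real.sqrt c), inv_mul_cancel₀ hsc.ne', one_mul,
        ← mul_assoc (Real.sqrt c) (Real.sqrt c), hcc,
        ← mul_assoc ((Real.sqrt c)⁻¹) ((Real.sqrt c)⁻¹), hcinv] at h3
      exact h3
    have hpq : p * q ≤ (a * (a + b)) * ((‖x‖ * ‖y‖) * (‖x‖ * ‖y‖)) := by
      have h4 := hPle x
      have h5 := hQle y
      rw [← hs] at h4
      rw [← ht] at h5
      have hn1 : (0:ℝ) ≤ ‖x‖ := norm_nonneg _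
      have hn2 : (0:ℝ) ≤ ‖y‖ := norm_nonneg _
      have := mul_le_mul h4 h5 (hQ0 t) (by positivity)
      calc p * q ≤ (a * (‖x‖ * ‖x‖)) * ((a + b) * (‖y‖ * ‖y‖)) := this
        _ = (a * (a + b)) * ((‖x‖ * ‖y‖) * (‖x‖ * ‖y‖)) := by ring
    calc (X - Y - Z) *ᵥ s ⬝ᵥ t ≤ Real.sqrt (p * q) := hmin
      _ ≤ Real.sqrt ((a * (a + b)) * ((‖x‖ * ‖y‖) * (‖x‖ * ‖y‖))) := Real.sqrt_le_sqrt hpq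
      _ = C * (‖x‖ * ‖y‖) := by
          rw [hC_def, Real.sqrt_mul (show (0:ℝ) ≤ a * (a + b) by positivity)
              ((‖x‖ * ‖y‖) * (‖x‖ * ‖y‖)),
            Real.sqrt_mul_self (show (0:ℝ) ≤ ‖x‖ * ‖y‖ by positivity)]
  -- conclude
  rw [← Real.sqrt_eq_rpow, ← Real.sqrt_eq_rpow]
  have hfin : C ≤ a + Real.sqrt b * Real.sqrt a := by
    have hsq : a * (a + b) ≤ (a + Real.sqrt b * Real.sqrt a) ^ 2 := by
      have h1 : Real.sqrt a * Real.sqrt a = a := Real.mul_self_sqrt ha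
      have h2 : Real.sqrt b * Real.sqrt b = b := Real.mul_self_sqrt hb
      nlinarith [Real.sqrt_nonneg a, Real.sqrt_nonneg b,
        mul_nonneg (Real.sqrt_nonneg b) (Real.sqrt_nonneg a)]
    calc C ≤ Real.sqrt ((a + Real.sqrt b * Real.sqrt a) ^ 2) := Real.sqrt_le_sqrt hsq
      _ = a + Real.sqrt b * Real.sqrt a := Real.sqrt_sq (by positivity)
  linarith
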